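/- arXiv:2305.07645 — 7 statements merged into one kernel-verified Lean document; each statement's English description precedes it below -/
import Mathlib

section
/- The relation on vertices of a simple graph, defined by v ~ w iff v and w are in the same connected component and for every pair of other vertices u1, u2 we have a_{v,u1}·a_{w,u2} = a_{v,u2}·a_{w,u1} (where a is the 0/1 adjacency matrix), is an equivalence relation. -/
namespace Foliage

variable {V : Type*}

open Classical in
/-- The 0/1 adjacency matrix entry. -/
noncomputable def adjNum (G : SimpleGraph V) (v u : V) : ℕ :=
  if G.Adj v u then 1 else 0

/-- The foliage relation: `v ~ w` iff `v` and `w` are in the same connected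
component and `a_{v,u₁}·a_{w,u₂} = a_{v,u₂}·a_{w,u₁}` for all other `u₁, u₂`. -/
def Rel (G : SimpleGraph V) (v w : V) : Prop :=
  G.Reachable v w ∧
    ∀ u₁ u₂ : V, u₁ ≠ v → u₁ ≠ w → u₂ ≠ v → u₂ ≠ w →
      adjNum G v u₁ * adjNum G w u₂ = adjNum G v u₂ * adjNum G w u₁

lemma adjNum_eq_one {G : SimpleGraph V} {v u : V} (h : G.Adj v u) : adjNum G v u = 1 := by
  simp [adjNum, h]

lemma adjNum_eq_zero {G : SimpleGraph V} {v u : V} (h : ¬ G.Adj v u) : adjNum G v u = 0 := by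
  simp [adjNum, h]

lemma adj_of_adjNum {G : SimpleGraph V} {v u : V} (h : adjNum G v u ≠ 0) : G.Adj v u := by
  by_contra hc
  exact h (adjNum_eq_zero hc)

/-- Structural characterization of the cross-product condition. -/
lemma cross_iff (G : SimpleGraph V) (v w : V) :
    (∀ u₁ u₂ : V, u₁ ≠ v → u₁ ≠ w → u₂ ≠ v → u₂ ≠ w →
      adjNum G v u₁ * adjNum G w u₂ = adjNum G v u₂ * adjNum G w u₁) ↔
    ((∀ u, u ≠ v → u ≠ w → ¬ G.Adj v u) ∨ (∀ u, u ≠ v → u ≠ w → ¬ G.Adj w u) ∨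
      (∀ u, u ≠ v → u ≠ w → (G.Adj v u ↔ G.Adj w u))) := by
  constructor
  · intro h
    by_cases hv : ∀ u, u ≠ v → u ≠ w → ¬ G.Adj v u
    · exact Or.inl hv
    by_cases hw : ∀ u, u ≠ v → u ≠ w → ¬ G.Adj w u
    · exact Or.inr (Or.inl hw)
    push_neg at hv hw
    obtain ⟨u₁, h1v, h1w, ha1⟩ := hv
    obtain ⟨u₂, h2v, h2w, ha2⟩ := hw
    refine Or.inr (Or.inr fun u huv huw => ⟨fun hvu => ?_, fun hwu => ?_⟩)
    · have := h u u₂ huv huw h2v h2w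
      rw [adjNum_eq_one hvu, adjNum_eq_one ha2] at this
      refine adj_of_adjNum fun hz => ?_
      rw [hz, mul_zero] at this
      simp at this
    · have := h u₁ u h1v h1w huv huw
      rw [adjNum_eq_one ha1, adjNum_eq_one hwu] at this
      refine adj_of_adjNum fun hz => ?_
      rw [hz, zero_mul] at this
      simp at this
  · rintro (h | h | h) u₁ u₂ h1v h1w h2v h2w
    · rw [adjNum_eq_zero (h u₁ h1v h1w), adjNum_eq_zero (h u₂ h2v h2w), zero_mul, zero_mul]
    · rw [adjNum_eq_zero (h u₁ h1v h1w), adjNum_eq_zero (h u₂ h2v h2w), mul_zero, mul_zero]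
    · have e1 : adjNum G v u₁ = adjNum G w u₁ := by
        by_cases ha : G.Adj v u₁
        · rw [adjNum_eq_one ha, adjNum_eq_one ((h u₁ h1v h1w).mp ha)]
        · rw [adjNum_eq_zero ha, adjNum_eq_zero (fun hc => ha ((h u₁ h1v h1w).mpr hc))]
      have e2 : adjNum G v u₂ = adjNum G w u₂ := by
        by_cases ha : G.Adj v u₂
        · rw [adjNum_eq_one ha, adjNum_eq_one ((h u₂ h2v h2w).mp ha)]
        · rw [adjNum_eq_zero ha, adjNum_eq_zero (fun hc => ha ((h u₂ h2v h2w).mpr hc))]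
      rw [e1, e2, mul_comm]

lemma adj_of_reachable_pendant {G : SimpleGraph V} {v w : V} (hr : G.Reachable v w)
    (hne : v ≠ w) (hz : ∀ u, u ≠ v → u ≠ w → ¬ G.Adj v u) : G.Adj v w := by
  obtain ⟨p⟩ := hr
  cases p with
  | nil => exact absurd rfl hne
  | cons ha _ =>
    rename_i u _
    by_cases huw : u = w
    · exact huw ▸ ha
    · exact absurd ha (hz u (fun h => G.irrefl (h ▸ ha)) huw)

theorem foliage_rel_equivalence [Fintype V] (G : SimpleGraph V) :
    Equivalence (Rel G) := by
  constructor
  · intro v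
    exact ⟨⟨SimpleGraph.Walk.nil⟩, fun u₁ u₂ _ _ _ _ => mul_comm _ _⟩
  · rintro v w ⟨hr, hc⟩
    refine ⟨hr.symm, fun u₁ u₂ h1w h1v h2w h2v => ?_⟩
    rw [mul_comm, mul_comm (adjNum G w u₂)]
    exact hc u₂ u₁ h2v h2w h1v h1w
  · rintro v w x ⟨hr1, hc1⟩ ⟨hr2, hc2⟩
    refine ⟨hr1.trans hr2, ?_⟩
    by_cases hvw : v = w
    · subst hvw; exact hc2
    by_cases hwx : w = x
    · subst hwx; exact hc1
    by_cases hvx : v = x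
    · subst hvx; intro u₁ u₂ _ _ _ _; exact mul_comm _ _
    have hwv : w ≠ v := Ne.symm hvw
    have hxw : x ≠ w := Ne.symm hwx
    have hxv : x ≠ v := Ne.symm hvx
    rw [cross_iff] at hc1 hc2 ⊢
    rcases hc1 with hz1 | hz1 | he1
    · -- v pendant at w
      have havw : G.Adj v w := adj_of_reachable_pendant hr1 hvw hz1
      rcases hc2 with hz2 | hz2 | he2
      · exact absurd havw.symm (hz2 v hvw hvx)
      · -- x pendant at w : v,x twins via w
        have haxw : G.Adj x w := adj_of_reachable_pendant hr2.symm hxw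
          (fun u hux huw => hz2 u huw hux)
        refine Or.inr (Or.inr fun u huv hux => ?_)
        by_cases huw : u = w
        · subst huw; exact ⟨fun _ => haxw, fun _ => havw⟩
        · exact ⟨fun h => absurd h (hz1 u huv huw),
            fun h => absurd h (hz2 u huw hux)⟩
      · have : G.Adj x v := (he2 v hvw hvx).mp havw.symm
        exact absurd this.symm (hz1 x hxv hxw)
    · -- w pendant at v
      have hawv : G.Adj w v := adj_of_reachable_pendant hr1.symm hwv
        (fun u huw huv => hz1 u huv huw)
      rcases hc2 with hz2 | hz2 | he2
      · exact absurd hawv (hz2 v hvw hvx)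
      · have haxw : G.Adj x w := adj_of_reachable_pendant hr2.symm hxw
          (fun u hux huw => hz2 u huw hux)
        exact absurd haxw.symm (hz1 x hxv hxw)
      · -- x pendant at v
        refine Or.inr (Or.inl fun u huv hux => ?_)
        by_cases huw : u = w
        · subst huw
          intro hxw'
          exact absurd hxw'.symm (hz1 x hxv hxw)
        · intro hxu
          exact absurd ((he2 u huw hux).mpr hxu) (hz1 u huv huw)
    · -- v,w equal off {v,w}
      rcases hc2 with hz2 | hz2 | he2
      · -- w pendant at x ⇒ v has no neighbors off {v,x}
        refine Or.inl fun u huv hux => ?_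
        by_cases huw : u = w
        · subst huw
          intro hvw'
          exact absurd hvw'.symm (hz2 v hvw hvx)
        · intro hvu
          exact absurd ((he1 u huv huw).mp hvu) (hz2 u huw hux)
      · -- x pendant at w: impossible, x would be isolated
        have hnxv : ¬ G.Adj x v := hz2 v hvw hvx
        have hnwx : ¬ G.Adj w x := fun h => hnxv ((he1 x hxv hxw).mpr h).symm
        have haxw : G.Adj x w := adj_of_reachable_pendant hr2.symm hxw
          (fun u hux huw => hz2 u huw hux)
        exact absurd haxw.symm hnwx
      · -- both twins
        refine Or.inr (Or.inr fun u huv hux => ?_)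
        by_cases huw : u = w
        · subst huw
          constructor
          · intro hvw'
            have hxv' : G.Adj x v := (he2 v hvw hvx).mp hvw'.symm
            exact ((he1 x hxv hxw).mp hxv'.symm).symm
          · intro hxw'
            have hvx' : G.Adj v x := (he1 x hxv hxw).mpr hxw'.symm
            exact ((he2 v hvw hvx).mpr hvx'.symm).symm
        · exact (he1 u huv huw).trans (he2 u huw hux)

end Foliage
end

section
/- Local complementation preserves the foliage relation: if G is a connected simple graph, a ∈ V, and τ_a(G) is the graph obtained by local complementation at a (complementing the induced subgraph on the neighborhood of a), then for all vertices v, w: v ~ w in G if and only if v ~ w in τ_a(G), where ~ is the foliage equivalence relation. -/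
namespace Foliage

variable {V : Type*}

/-- Local complementation at a vertex `x`: the induced subgraph on the
neighborhood of `x` is complemented (addition of `Γ_{K_{N_x}}` mod 2). -/
def lc (G : SimpleGraph V) (x : V) : SimpleGraph V where
  Adj v w := v ≠ w ∧ ¬ (G.Adj v w ↔ G.Adj x v ∧ G.Adj x w)
  symm := ⟨by
    intro v w h
    refine ⟨h.1.symm, fun hiff => h.2 ?_⟩
    constructor
    · intro hvw; exact (hiff.mp (G.adj_symm hvw)).symm
    · intro hx; exact G.adj_symm (hiff.mpr hx.symm)⟩
  loopless := ⟨fun v h => h.1 rfl⟩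

/-! Over `ℤ/2` the product condition says that the rows `r_v`, `r_w` of the adjacency matrix,
restricted to the vertices outside `{v, w}`, are dependent: `r_v = 0`, `r_w = 0` or `r_v = r_w`.
Local complementation at `x` adds the row of `x` to the row of every neighbour of `x`. For
`x ∉ {v, w}` a zero row belongs to a non-neighbour of `x` and stays zero, and equal rows stay equal.
For `x = v` adjacent to `w` the pair becomes `(r_v, r_v + r_w)`, which permutes the three cases.
A deleted edge `ab` is bypassed by `a x b`, and `lc` is an involution, which gives the converse. -/

section LocalComplementation

variable (G : SimpleGraph V) {x v u : V}

theorem lc_adj_iff :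
    (lc G x).Adj v u ↔ v ≠ u ∧ ¬(G.Adj v u ↔ G.Adj x v ∧ G.Adj x u) :=
  Iff.rfl

theorem lc_adj_of_not_adj (hxv : ¬G.Adj x v) : (lc G x).Adj v u ↔ G.Adj v u := by
  rw [lc_adj_iff]
  have := G.ne_of_adj (a := v) (b := u)
  tauto

theorem lc_adj_self : (lc G x).Adj x u ↔ G.Adj x u :=
  lc_adj_of_not_adj G (G.loopless.irrefl x)

theorem lc_adj_of_adj (hxv : G.Adj x v) (hvu : v ≠ u) :
    (lc G x).Adj v u ↔ ¬(G.Adj v u ↔ G.Adj x u) := by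
  rw [lc_adj_iff]
  tauto

theorem lc_lc : lc (lc G x) x = G := by
  ext v u
  rw [lc_adj_iff, lc_adj_self, lc_adj_self, lc_adj_iff]
  have := G.ne_of_adj (a := v) (b := u)
  tauto

theorem reachable_lc_of_adj {a b : V} (h : G.Adj a b) : (lc G x).Reachable a b := by
  by_cases hab : (lc G x).Adj a b
  · exact hab.reachable
  · obtain ⟨hxa, hxb⟩ : G.Adj x a ∧ G.Adj x b := by
      rw [lc_adj_iff] at hab
      have := G.ne_of_adj h
      tauto
    exact ((lc_adj_self G).mpr hxa).reachable.symm.trans ((lc_adj_self G).mpr hxb).reachable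

theorem reachable_lc {v w : V} (h : G.Reachable v w) : (lc G x).Reachable v w := by
  obtain ⟨p⟩ := h
  induction p with
  | nil => rfl
  | cons hadj _ ih => exact (reachable_lc_of_adj G hadj).trans ih

end LocalComplementation

section FoliagePair

def NoOuterNbr (G : SimpleGraph V) (v w : V) : Prop :=
  ∀ u, u ≠ v → u ≠ w → ¬G.Adj v u

def OuterTwins (G : SimpleGraph V) (v w : V) : Prop :=
  ∀ u, u ≠ v → u ≠ w → (G.Adj v u ↔ G.Adj w u)

def IsFoliagePair (G : SimpleGraph V) (v w : V) : Prop :=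
  NoOuterNbr G v w ∨ NoOuterNbr G w v ∨ OuterTwins G v w

variable {G : SimpleGraph V} {x v w : V}

theorem OuterTwins.symm (h : OuterTwins G v w) : OuterTwins G w v :=
  fun u huw huv => (h u huv huw).symm

theorem IsFoliagePair.symm (h : IsFoliagePair G v w) : IsFoliagePair G w v := by
  rcases h with h | h | h
  exacts [Or.inr (Or.inl h), Or.inl h, Or.inr (Or.inr h.symm)]

theorem adjNum_mul_eq_iff (G : SimpleGraph V) (v w u₁ u₂ : V) :
    adjNum G v u₁ * adjNum G w u₂ = adjNum G v u₂ * adjNum G w u₁ ↔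
      (G.Adj v u₁ ∧ G.Adj w u₂ ↔ G.Adj v u₂ ∧ G.Adj w u₁) := by
  classical
  unfold adjNum
  split_ifs <;> simp_all

theorem forall_adj_minor_iff_isFoliagePair :
    (∀ u₁ u₂ : V, u₁ ≠ v → u₁ ≠ w → u₂ ≠ v → u₂ ≠ w →
      (G.Adj v u₁ ∧ G.Adj w u₂ ↔ G.Adj v u₂ ∧ G.Adj w u₁)) ↔ IsFoliagePair G v w := by
  constructor
  · intro h
    by_contra hne
    simp only [IsFoliagePair, NoOuterNbr, OuterTwins, not_or, not_forall, not_not] at hne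
    obtain ⟨⟨u₁, h₁v, h₁w, hvu₁⟩, ⟨u₂, h₂w, h₂v, hwu₂⟩, u, huv, huw, hu⟩ := hne
    have := h u u₂ huv huw h₂v h₂w
    have := h u₁ u h₁v h₁w huv huw
    tauto
  · rintro (h | h | h) u₁ u₂ h₁v h₁w h₂v h₂w
    · have := h u₁ h₁v h₁w; have := h u₂ h₂v h₂w; tauto
    · have := h u₁ h₁w h₁v; have := h u₂ h₂w h₂v; tauto
    · have := h u₁ h₁v h₁w; have := h u₂ h₂v h₂w; tauto

theorem rel_iff : Rel G v w ↔ G.Reachable v w ∧ IsFoliagePair G v w := by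
  simp only [Rel, adjNum_mul_eq_iff, forall_adj_minor_iff_isFoliagePair]

theorem NoOuterNbr.lc (h : NoOuterNbr G v w) (hxv : ¬G.Adj x v) : NoOuterNbr (lc G x) v w :=
  fun u huv huw => by rw [lc_adj_of_not_adj G hxv]; exact h u huv huw

theorem OuterTwins.lc_of_ne (h : OuterTwins G v w) (hxv : x ≠ v) (hxw : x ≠ w) :
    OuterTwins (lc G x) v w := by
  have hx : G.Adj x v ↔ G.Adj x w := by simpa only [G.adj_comm x] using h x hxv hxw
  intro u huv huw
  have := h u huv huw
  rw [lc_adj_iff, lc_adj_iff]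
  have := huv.symm
  have := huw.symm
  tauto

theorem IsFoliagePair.lc_self (h : IsFoliagePair G v w) : IsFoliagePair (lc G v) v w := by
  by_cases hvw : G.Adj v w
  · have hw (u) (huw : u ≠ w) : (lc G v).Adj w u ↔ ¬(G.Adj w u ↔ G.Adj v u) :=
      lc_adj_of_adj G hvw huw.symm
    rcases h with h | h | h
    · exact Or.inl (h.lc (G.loopless.irrefl v))
    · refine Or.inr (Or.inr fun u huv huw => ?_)
      rw [lc_adj_self, hw u huw]
      have := h u huw huv
      tauto
    · refine Or.inr (Or.inl fun u huw huv => ?_)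
      rw [hw u huw]
      have := h u huv huw
      tauto
  · have hv (u) : (lc G v).Adj v u ↔ G.Adj v u := lc_adj_self G
    have hw (u) : (lc G v).Adj w u ↔ G.Adj w u := lc_adj_of_not_adj G hvw
    simpa only [IsFoliagePair, NoOuterNbr, OuterTwins, hv, hw] using h

theorem IsFoliagePair.lc (h : IsFoliagePair G v w) : IsFoliagePair (lc G x) v w := by
  by_cases hxv : x = v
  · subst hxv
    exact h.lc_self
  by_cases hxw : x = w
  · subst hxw
    exact h.symm.lc_self.symm
  rcases h with h | h | h
  · exact Or.inl (h.lc fun hx => h x hxv hxw hx.symm)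
  · exact Or.inr (Or.inl (h.lc fun hx => h x hxw hxv hx.symm))
  · exact Or.inr (Or.inr (h.lc_of_ne hxv hxw))

end FoliagePair

theorem Rel.lc {G : SimpleGraph V} {x v w : V} (h : Rel G v w) : Rel (lc G x) v w := by
  rw [rel_iff] at h ⊢
  exact ⟨reachable_lc G h.1, h.2.lc⟩

theorem lc_preserves_foliage_rel_general (G : SimpleGraph V) (x : V) :
    ∀ v w : V, Rel G v w ↔ Rel (lc G x) v w := by
  intro v w
  refine ⟨Rel.lc, fun h => ?_⟩
  simpa only [lc_lc] using h.lc (x := x)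

theorem lc_preserves_foliage_rel [Fintype V] (G : SimpleGraph V)
    (hconn : G.Connected) (x : V) :
    ∀ v w : V, Rel G v w ↔ Rel (lc G x) v w :=
  lc_preserves_foliage_rel_general G x

end Foliage
end

section
/- For a connected d-weighted graph, the foliage equivalence relation is invariant under the qudit local complementation operations *_a w (adding a·ω_{wj}·ω_{wk} to each off-diagonal entry (j,k)) and ∘_b v (multiplying all weights incident to v by a nonzero scalar b), for any a ∈ Z_d and nonzero b ∈ Z_d with d prime. -/
/-! Both operations are invertible, with inverses `*_{-a} x` and `∘_{b⁻¹} x` of the same kind,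
so it suffices to show that each of them maps `v ~ w` to `v ~ w`. For `∘_b x` both sides of the
defining identity are multiplied by the same scalar; for `*_a x` see `WRel.starOp`. -/

namespace Foliage

variable {d : ℕ} {V : Type*}

def wGraph (ω : V → V → ZMod d) : SimpleGraph V where
  Adj v w := v ≠ w ∧ (ω v w ≠ 0 ∨ ω w v ≠ 0)
  symm := ⟨fun v w h => ⟨h.1.symm, h.2.symm⟩⟩
  loopless := ⟨fun v h => h.1 rfl⟩

/-- The foliage relation (weight products coincide for all other pairs). -/
def WRel (ω : V → V → ZMod d) (v w : V) : Prop :=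
  ∀ u₁ u₂ : V, u₁ ≠ v → u₁ ≠ w → u₂ ≠ v → u₂ ≠ w →
    ω v u₁ * ω w u₂ = ω v u₂ * ω w u₁

/-- The qudit local complementation `*_a w`. -/
def starOp [DecidableEq V] (ω : V → V → ZMod d) (a : ZMod d) (w : V) :
    V → V → ZMod d :=
  fun j k => if j = k then 0 else ω j k + a * ω w j * ω w k

/-- The qudit local scaling `∘_b v`. -/
def circOp [DecidableEq V] (ω : V → V → ZMod d) (b : ZMod d) (v : V) :
    V → V → ZMod d :=
  fun j k => (if j = v then b else 1) * ω j k * (if k = v then b else 1)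

section LocalComplementation

variable [DecidableEq V] {ω : V → V → ZMod d}

lemma starOp_symm (hsymm : ∀ v w, ω v w = ω w v) (a : ZMod d) (x j k : V) :
    starOp ω a x j k = starOp ω a x k j := by
  by_cases h : j = k
  · rw [h]
  · simp only [starOp, if_neg h, if_neg (Ne.symm h), hsymm j k]
    ring

lemma starOp_self (ω : V → V → ZMod d) (a : ZMod d) (x j : V) : starOp ω a x j j = 0 :=
  if_pos rfl

lemma starOp_apply_center (hdiag : ∀ v, ω v v = 0) (a : ZMod d) (x j : V) :
    starOp ω a x x j = ω x j := by
  by_cases h : x = j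
  · rw [← h, starOp_self, hdiag]
  · simp only [starOp, if_neg h, hdiag]
    ring

lemma starOp_starOp_neg (hdiag : ∀ v, ω v v = 0) (a : ZMod d) (x : V) :
    starOp (starOp ω a x) (-a) x = ω := by
  funext j k
  by_cases h : j = k
  · rw [h, starOp_self, hdiag]
  · rw [starOp, if_neg h, starOp_apply_center hdiag, starOp_apply_center hdiag, starOp,
      if_neg h]
    ring

/-- The cross terms created by `*_a x` cancel because `v ~ w` also holds for the pairs through
`x`; when `x ∈ {v, w}` the operation just rescales the row of `x`. -/
lemma WRel.starOp (hsymm : ∀ v w, ω v w = ω w v) {v w : V} (h : WRel ω v w)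
    (a : ZMod d) (x : V) : WRel (starOp ω a x) v w := by
  intro u₁ u₂ h1v h1w h2v h2w
  simp only [Foliage.starOp, if_neg (Ne.symm h1v), if_neg (Ne.symm h1w),
    if_neg (Ne.symm h2v), if_neg (Ne.symm h2w)]
  have h12 := h u₁ u₂ h1v h1w h2v h2w
  by_cases hxv : x = v
  · subst hxv
    linear_combination (1 + a * ω x x) * h12
  by_cases hxw : x = w
  · subst hxw
    linear_combination (1 + a * ω x x) * h12
  rw [hsymm x v, hsymm x w]
  linear_combination h12 + a * ω x u₂ * h u₁ x h1v h1w hxv hxw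
    - a * ω x u₁ * h u₂ x h2v h2w hxv hxw

lemma wRel_starOp_iff (hsymm : ∀ v w, ω v w = ω w v) (hdiag : ∀ v, ω v v = 0)
    (a : ZMod d) (x v w : V) : WRel (starOp ω a x) v w ↔ WRel ω v w := by
  refine ⟨fun h => ?_, fun h => h.starOp hsymm a x⟩
  rw [← starOp_starOp_neg hdiag a x]
  exact h.starOp (starOp_symm hsymm a x) (-a) x

end LocalComplementation

section LocalScaling

variable [DecidableEq V] {ω : V → V → ZMod d}

lemma circOp_circOp (ω : V → V → ZMod d) (b c : ZMod d) (x : V) :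
    circOp (circOp ω b x) c x = circOp ω (c * b) x := by
  funext j k
  simp only [circOp]
  split_ifs <;> ring

lemma circOp_one (ω : V → V → ZMod d) (x : V) : circOp ω 1 x = ω := by
  funext j k
  simp [circOp]

lemma WRel.circOp {v w : V} (h : WRel ω v w) (b : ZMod d) (x : V) :
    WRel (circOp ω b x) v w := by
  intro u₁ u₂ h1v h1w h2v h2w
  simp only [Foliage.circOp]
  linear_combination ((if v = x then b else 1) * (if w = x then b else 1) *
    (if u₁ = x then b else 1) * (if u₂ = x then b else 1)) * h u₁ u₂ h1v h1w h2v h2w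

lemma wRel_circOp_iff {b : ZMod d} (hb : IsUnit b) (x v w : V) :
    WRel (circOp ω b x) v w ↔ WRel ω v w := by
  refine ⟨fun h => ?_, fun h => h.circOp b x⟩
  obtain ⟨c, hcb⟩ := hb.exists_left_inv
  rw [← circOp_one ω x, ← hcb, ← circOp_circOp]
  exact h.circOp c x

end LocalScaling

theorem qudit_lc_preserves_foliage_rel_general [DecidableEq V]
    (hd : Nat.Prime d) (ω : V → V → ZMod d)
    (hsymm : ∀ v w, ω v w = ω w v) (hdiag : ∀ v, ω v v = 0)
    (a : ZMod d) (b : ZMod d) (hb : b ≠ 0) (x : V) :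
    (∀ v w : V, WRel ω v w ↔ WRel (starOp ω a x) v w) ∧
    (∀ v w : V, WRel ω v w ↔ WRel (circOp ω b x) v w) := by
  have : Fact d.Prime := ⟨hd⟩
  exact ⟨fun v w => (wRel_starOp_iff hsymm hdiag a x v w).symm,
    fun v w => (wRel_circOp_iff hb.isUnit x v w).symm⟩

theorem qudit_lc_preserves_foliage_rel [Fintype V] [DecidableEq V]
    (hd : Nat.Prime d) (ω : V → V → ZMod d)
    (hsymm : ∀ v w, ω v w = ω w v) (hdiag : ∀ v, ω v v = 0)
    (hconn : (wGraph ω).Connected)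
    (a : ZMod d) (b : ZMod d) (hb : b ≠ 0) (x : V) :
    (∀ v w : V, WRel ω v w ↔ WRel (starOp ω a x) v w) ∧
    (∀ v w : V, WRel ω v w ↔ WRel (circOp ω b x) v w) :=
  qudit_lc_preserves_foliage_rel_general hd ω hsymm hdiag a b hb x

end Foliage
end

section
/- In a connected simple graph with at least 3 vertices, if a foliage-partition class V_i contains a leaf v (a vertex of degree 1), then V_i consists of v's unique neighbor w together with all leaves adjacent to w. -/
/-!
Since the only neighbour of the leaf `v` is `w`, taking `u₁ = w` in the identity defining
`v ~ x` gives `a_{x,u} = a_{v,u} · a_{x,w}` for every `u ∉ {v, x}`. If `x ∉ {v, w}`, then `x` is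
not adjacent to `v`; so either `a_{x,w} = 0` and `x` is isolated, which reachability from `v`
forbids, or `a_{x,w} = 1` and the neighbourhood of `x` is exactly `{w}`. Conversely, all products
`a_{v,u}` with `u ≠ w` vanish, which gives `v ~ w`, and a leaf on `w` has the same adjacency row
as `v`, which gives `v ~ x`.
-/

namespace Foliage

variable {V : Type*}

theorem ncard_eq_one_and_mem_iff_eq_singleton {α : Type*} {s : Set α} {a : α} :
    s.ncard = 1 ∧ a ∈ s ↔ s = {a} := by
  constructor
  · rintro ⟨hs, ha⟩
    obtain ⟨b, rfl⟩ := Set.ncard_eq_one.mp hs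
    rw [Set.mem_singleton_iff.mp ha]
  · rintro rfl
    exact ⟨Set.ncard_singleton a, rfl⟩

variable {G : SimpleGraph V}

theorem adjNum_eq_one_iff {v u : V} : adjNum G v u = 1 ↔ G.Adj v u := by
  unfold adjNum
  split_ifs with h <;> simp [h]

theorem adjNum_eq_zero_of_not_adj {v u : V} (h : ¬G.Adj v u) : adjNum G v u = 0 := by
  simp [adjNum, h]

theorem adjNum_eq_of_neighborSet_eq {v x : V} (h : G.neighborSet v = G.neighborSet x) :
    adjNum G v = adjNum G x := by
  funext u
  have hu : G.Adj v u ↔ G.Adj x u := Set.ext_iff.mp h u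
  unfold adjNum
  split_ifs <;> simp_all

theorem adj_iff_of_neighborSet_eq_singleton {v w u : V} (hv : G.neighborSet v = {w}) :
    G.Adj v u ↔ u = w :=
  Set.ext_iff.mp hv u

theorem rel_of_neighborSet_eq {v x : V} (hreach : G.Reachable v x)
    (h : G.neighborSet v = G.neighborSet x) : Rel G v x := by
  refine ⟨hreach, fun u₁ u₂ _ _ _ _ => ?_⟩
  rw [adjNum_eq_of_neighborSet_eq h, mul_comm]

theorem rel_of_neighborSet_eq_singleton {v w : V} (hv : G.neighborSet v = {w}) : Rel G v w := by
  have hvw : G.Adj v w := (adj_iff_of_neighborSet_eq_singleton hv).mpr rfl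
  refine ⟨hvw.reachable, fun u₁ u₂ _ hu₁ _ hu₂ => ?_⟩
  have hnot : ∀ u, u ≠ w → ¬G.Adj v u := fun u hu hadj =>
    hu ((adj_iff_of_neighborSet_eq_singleton hv).mp hadj)
  rw [adjNum_eq_zero_of_not_adj (hnot u₁ hu₁), adjNum_eq_zero_of_not_adj (hnot u₂ hu₂),
    zero_mul, zero_mul]

theorem Rel.neighborSet_eq_singleton {v w x : V} (hrel : Rel G v x)
    (hv : G.neighborSet v = {w}) (hxw : x ≠ w) (hxv : x ≠ v) : G.neighborSet x = {w} := by
  have hadjv : ∀ u, G.Adj v u ↔ u = w := fun _ => adj_iff_of_neighborSet_eq_singleton hv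
  have hwv : w ≠ v := ((hadjv w).mpr rfl).ne.symm
  have hxv_not_adj : ¬G.Adj x v := fun h => hxw ((hadjv x).mp h.symm)
  have key : ∀ u, u ≠ v → u ≠ x → (G.Adj x u ↔ G.Adj v u ∧ G.Adj x w) := by
    intro u huv hux
    have h := hrel.2 w u hwv (Ne.symm hxw) huv hux
    rw [(adjNum_eq_one_iff).mpr ((hadjv w).mpr rfl), one_mul] at h
    rw [← adjNum_eq_one_iff, ← adjNum_eq_one_iff, ← adjNum_eq_one_iff, h, mul_eq_one]
  have hxw_adj : G.Adj x w := by
    obtain ⟨p⟩ := hrel.1.symm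
    have hsnd : G.Adj x p.snd := p.adj_snd (SimpleGraph.Walk.not_nil_of_ne hxv)
    have hsnd_v : p.snd ≠ v := fun h => hxv_not_adj (h ▸ hsnd)
    exact ((key _ hsnd_v hsnd.ne.symm).mp hsnd).2
  ext u
  refine ⟨fun hxu => ?_, fun hu => (Set.mem_singleton_iff.mp hu) ▸ hxw_adj⟩
  have huv : u ≠ v := fun h => hxv_not_adj (h ▸ hxu)
  exact (hadjv u).mp ((key u huv (G.ne_of_adj hxu).symm).mp hxu).1

theorem foliage_class_of_leaf_general (G : SimpleGraph V)
    (v w : V) (hleaf : (G.neighborSet v).ncard = 1) (hnbr : G.Adj v w) :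
    ∀ x : V, Rel G v x ↔
      (x = w ∨ ((G.neighborSet x).ncard = 1 ∧ G.Adj x w)) := by
  have hv : G.neighborSet v = {w} := ncard_eq_one_and_mem_iff_eq_singleton.mp ⟨hleaf, hnbr⟩
  intro x
  rw [← SimpleGraph.mem_neighborSet, ncard_eq_one_and_mem_iff_eq_singleton]
  constructor
  · intro hrel
    by_cases hxw : x = w
    · exact Or.inl hxw
    by_cases hxv : x = v
    · exact Or.inr (hxv ▸ hv)
    exact Or.inr (hrel.neighborSet_eq_singleton hv hxw hxv)
  · rintro (rfl | hx)
    · exact rel_of_neighborSet_eq_singleton hv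
    · have hxw : G.Adj x w := (adj_iff_of_neighborSet_eq_singleton hx).mpr rfl
      exact rel_of_neighborSet_eq (hnbr.reachable.trans hxw.reachable.symm) (hv.trans hx.symm)

/-- If a foliage class contains a leaf `v` with unique neighbor `w`, then the
class consists of `w` together with all leaves adjacent to `w`. -/
theorem foliage_class_of_leaf [Fintype V] (G : SimpleGraph V)
    (hconn : G.Connected) (hcard : 3 ≤ Fintype.card V)
    (v w : V) (hleaf : (G.neighborSet v).ncard = 1) (hnbr : G.Adj v w) :
    ∀ x : V, Rel G v x ↔
      (x = w ∨ ((G.neighborSet x).ncard = 1 ∧ G.Adj x w)) :=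
  foliage_class_of_leaf_general G v w hleaf hnbr

end Foliage
end

section
/- In a connected simple graph, if a foliage-partition class V_i contains no leaf, then any two vertices in V_i are twins, i.e., they have the same neighborhood outside {v, w}: N_v \ {w} = N_w \ {v}. -/
namespace Foliage

variable {V : Type*}

private lemma exists_nbr (G : SimpleGraph V) (h : G.Reachable x y) (hxy : x ≠ y) :
    (G.neighborSet x).Nonempty := by
  obtain ⟨p⟩ := h
  cases p with
  | nil => exact absurd rfl hxy
  | cons h p => exact ⟨_, h⟩

/-- If a foliage class contains no leaf, then any two of its vertices are
twins: they have the same neighborhood outside of the pair. -/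
theorem foliage_class_no_leaf_twins [Fintype V] (G : SimpleGraph V)
    (hconn : G.Connected) (v w : V) (hrel : Rel G v w)
    (hnoleaf : ∀ x : V, Rel G v x → (G.neighborSet x).ncard ≠ 1) :
    ∀ u : V, u ≠ v → u ≠ w → (G.Adj v u ↔ G.Adj w u) := by
  intro u huv huw
  by_cases hvw : v = w
  · subst hvw; rfl
  constructor
  · intro hvu
    by_contra hwu
    have hsub : G.neighborSet w ⊆ {v} := by
      intro x hx
      simp only [SimpleGraph.mem_neighborSet] at hx
      by_contra hxv
      simp only [Set.mem_singleton_iff] at hxv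
      have := hrel.2 u x huv huw hxv hx.ne'
      simp [adjNum, if_pos hvu, if_neg hwu, if_pos hx] at this
    have hne : (G.neighborSet w).Nonempty :=
      exists_nbr G (hconn.preconnected w v) (Ne.symm hvw)
    have : G.neighborSet w = {v} :=
      Set.eq_singleton_iff_nonempty_unique_mem.2 ⟨hne, fun x hx => hsub hx⟩
    exact hnoleaf w hrel (by rw [this]; simp)
  · intro hwu
    by_contra hvu
    have hsub : G.neighborSet v ⊆ {w} := by
      intro x hx
      simp only [SimpleGraph.mem_neighborSet] at hx
      by_contra hxw
      simp only [Set.mem_singleton_iff] at hxw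
      have := hrel.2 u x huv huw hx.ne' hxw
      simp [adjNum, if_neg hvu, if_pos hwu, if_pos hx] at this
    have hne : (G.neighborSet v).Nonempty :=
      exists_nbr G (hconn.preconnected v w) hvw
    have : G.neighborSet v = {w} :=
      Set.eq_singleton_iff_nonempty_unique_mem.2 ⟨hne, fun x hx => hsub hx⟩
    have hrelvv : Rel G v v :=
      ⟨SimpleGraph.Reachable.refl v, fun a b _ _ _ _ => Nat.mul_comm _ _⟩
    exact hnoleaf v hrelvv (by rw [this]; simp)

end Foliage
end

section
/- In a connected d-weighted graph with no leaves, the vertices of any foliage-partition class are pairwise strong twins: for any v, w in the same class, N_v \ {w} = N_w \ {v} and there exists a ∈ Z_d with ω_{uv} = a·ω_{uw} for all u ∈ N_w \ {v}. -/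
/-!
Connectedness, a zero diagonal and the absence of leaves give every vertex `x` a neighbour
outside `{x, y}` for each `y ≠ x`. If `v ~ w`, `ω v u ≠ 0` and `ω w u = 0`, the foliage relation
`ω v u · ω w u' = ω v u' · ω w u = 0` forces every weight of `w` outside `{v, w}` to vanish,
which is impossible; hence `v` and `w` have the same neighbours. Dividing the same relation by a
fixed nonzero `ω w u₀` in the field `ZMod d` gives the common ratio.
-/

namespace Foliage

variable {d : ℕ} {V : Type*}

/-- Degree in a weighted graph: the number of vertices joined by a nonzero weight. -/
noncomputable def wDeg (ω : V → V → ZMod d) (x : V) : ℕ :=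
  {u : V | ω x u ≠ 0}.ncard

section Twins

variable {ω : V → V → ZMod d}

theorem exists_weight_ne_zero [Nontrivial V] (hsymm : ∀ v w, ω v w = ω w v)
    (hconn : (wGraph ω).Preconnected) (x : V) : ∃ u, ω x u ≠ 0 := by
  obtain ⟨u, -, hxu | hux⟩ := hconn.exists_adj_of_nontrivial x
  · exact ⟨u, hxu⟩
  · exact ⟨u, by rwa [hsymm] at hux⟩

theorem exists_weight_ne_zero_of_ne (hsymm : ∀ v w, ω v w = ω w v) (hdiag : ∀ v, ω v v = 0)
    (hconn : (wGraph ω).Preconnected) (hnoleaf : ∀ x : V, wDeg ω x ≠ 1) {x y : V}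
    (hxy : x ≠ y) : ∃ u, u ≠ x ∧ u ≠ y ∧ ω x u ≠ 0 := by
  by_contra! hzero
  have : Nontrivial V := ⟨⟨x, y, hxy⟩⟩
  have hsub : {u | ω x u ≠ 0} ⊆ {y} := by
    intro u hu
    by_contra huy
    rcases eq_or_ne u x with rfl | hux
    · exact hu (hdiag u)
    · exact hu (hzero u hux huy)
  have hne : {u | ω x u ≠ 0}.Nonempty := exists_weight_ne_zero hsymm hconn x
  apply hnoleaf x
  rw [wDeg, hne.subset_singleton_iff.mp hsub, Set.ncard_singleton]

namespace WRel

variable {v w : V}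

theorem symm (hrel : WRel ω v w) : WRel ω w v := fun u₁ u₂ hu₁w hu₁v hu₂w hu₂v => by
  linear_combination hrel u₂ u₁ hu₂v hu₂w hu₁v hu₁w

theorem weight_ne_zero [Fact d.Prime] (hrel : WRel ω v w)
    (hw : ∃ u', u' ≠ v ∧ u' ≠ w ∧ ω w u' ≠ 0) {u : V} (huv : u ≠ v) (huw : u ≠ w)
    (hv : ω v u ≠ 0) : ω w u ≠ 0 := by
  obtain ⟨u', hu'v, hu'w, hwu'⟩ := hw
  intro hwu
  have h := hrel u u' huv huw hu'v hu'w
  rw [hwu, mul_zero] at h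
  exact mul_ne_zero hv hwu' h

theorem exists_ratio [Fact d.Prime] (hrel : WRel ω v w) :
    ∃ a : ZMod d, ∀ u, u ≠ v → u ≠ w → ω w u ≠ 0 → ω v u = a * ω w u := by
  by_cases hex : ∃ u₀, u₀ ≠ v ∧ u₀ ≠ w ∧ ω w u₀ ≠ 0
  · obtain ⟨u₀, hu₀v, hu₀w, hwu₀⟩ := hex
    refine ⟨ω v u₀ * (ω w u₀)⁻¹, fun u huv huw _ => ?_⟩
    have h := hrel u₀ u hu₀v hu₀w huv huw
    field_simp
    linear_combination -h
  · exact ⟨0, fun u huv huw hwu => absurd ⟨u, huv, huw, hwu⟩ hex⟩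

end WRel

end Twins

theorem foliage_class_strong_twins_general (hd : Nat.Prime d)
    (ω : V → V → ZMod d)
    (hsymm : ∀ v w, ω v w = ω w v) (hdiag : ∀ v, ω v v = 0)
    (hconn : (wGraph ω).Connected)
    (hnoleaf : ∀ x : V, wDeg ω x ≠ 1)
    (v w : V) (hrel : WRel ω v w) :
    (∀ u : V, u ≠ v → u ≠ w → (ω v u ≠ 0 ↔ ω w u ≠ 0)) ∧
    ∃ a : ZMod d, ∀ u : V, u ≠ v → u ≠ w → ω w u ≠ 0 → ω u v = a * ω u w := by
  have := Fact.mk hd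
  refine ⟨fun u huv huw => ?_, ?_⟩
  · rcases eq_or_ne v w with rfl | hvw
    · rfl
    have hw := exists_weight_ne_zero_of_ne hsymm hdiag hconn.preconnected hnoleaf hvw.symm
    have hv := exists_weight_ne_zero_of_ne hsymm hdiag hconn.preconnected hnoleaf hvw
    exact ⟨hrel.weight_ne_zero (by simpa only [and_left_comm] using hw) huv huw,
      hrel.symm.weight_ne_zero (by simpa only [and_left_comm] using hv) huw huv⟩
  · obtain ⟨a, ha⟩ := hrel.exists_ratio
    exact ⟨a, fun u huv huw hwu => by rw [hsymm u v, hsymm u w, ha u huv huw hwu]⟩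

/-- In a connected weighted graph with no leaves, vertices of the same foliage
class are pairwise strong twins. -/
theorem foliage_class_strong_twins [Fintype V] (hd : Nat.Prime d)
    (ω : V → V → ZMod d)
    (hsymm : ∀ v w, ω v w = ω w v) (hdiag : ∀ v, ω v v = 0)
    (hconn : (wGraph ω).Connected)
    (hnoleaf : ∀ x : V, wDeg ω x ≠ 1)
    (v w : V) (hrel : WRel ω v w) :
    (∀ u : V, u ≠ v → u ≠ w → (ω v u ≠ 0 ↔ ω w u ≠ 0)) ∧
    ∃ a : ZMod d, ∀ u : V, u ≠ v → u ≠ w → ω w u ≠ 0 → ω u v = a * ω u w :=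
  foliage_class_strong_twins_general hd ω hsymm hdiag hconn hnoleaf v w hrel

end Foliage
end

section
/- For a simple connected graph G on n ≥ 2 vertices, the foliage partition is the partition of V into all singletons if and only if G has no leaf and no pair of twin vertices. -/
namespace Foliage

variable {V : Type*}

lemma adj_iff_of_adjNum_eq {G : SimpleGraph V} {v w u : V}
    (h : adjNum G v u = adjNum G w u) : (G.Adj v u ↔ G.Adj w u) := by
  classical
  by_cases h1 : G.Adj v u <;> by_cases h2 : G.Adj w u <;>
    simp_all [adjNum]

lemma exists_adj [Fintype V] (G : SimpleGraph V) (hconn : G.Connected)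
    (hcard : 2 ≤ Fintype.card V) (v : V) : ∃ x, G.Adj v x := by
  obtain ⟨u, hu⟩ := Fintype.exists_ne_of_one_lt_card hcard v
  obtain ⟨p⟩ := hconn.preconnected v u
  cases p with
  | nil => exact absurd rfl hu
  | cons h _ => exact ⟨_, h⟩

/-- The foliage partition is trivial (all classes singletons) iff the graph
has neither a leaf nor a pair of twins. -/
theorem trivial_foliage_iff [Fintype V] (G : SimpleGraph V)
    (hconn : G.Connected) (hcard : 2 ≤ Fintype.card V) :
    (∀ v w : V, Rel G v w → v = w) ↔
      ((∀ v : V, (G.neighborSet v).ncard ≠ 1) ∧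
       ∀ v w : V, v ≠ w →
         ¬ (∀ u : V, u ≠ v → u ≠ w → (G.Adj v u ↔ G.Adj w u))) := by
  constructor
  · intro htriv
    constructor
    · intro v hv
      obtain ⟨w, hw⟩ := Set.ncard_eq_one.mp hv
      have hadj : G.Adj v w := by
        have : w ∈ G.neighborSet v := by rw [hw]; exact rfl
        exact this
      have hrel : Rel G v w := by
        refine ⟨hconn.preconnected v w, fun u₁ u₂ h1v h1w h2v h2w => ?_⟩
        have hn1 : ¬ G.Adj v u₁ := fun h => h1w (by
          have : u₁ ∈ G.neighborSet v := h
          rwa [hw] at this)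
        have hn2 : ¬ G.Adj v u₂ := fun h => h2w (by
          have : u₂ ∈ G.neighborSet v := h
          rwa [hw] at this)
        rw [adjNum_eq_zero hn1, adjNum_eq_zero hn2, zero_mul, zero_mul]
      exact hadj.ne (htriv v w hrel)
    · intro v w hvw htw
      apply hvw
      apply htriv
      refine ⟨hconn.preconnected v w, fun u₁ u₂ h1v h1w h2v h2w => ?_⟩
      classical
      have e1 : adjNum G v u₁ = adjNum G w u₁ := by
        by_cases h : G.Adj v u₁
        · rw [adjNum_eq_one h, adjNum_eq_one ((htw u₁ h1v h1w).mp h)]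
        · rw [adjNum_eq_zero h,
            adjNum_eq_zero (fun hh => h ((htw u₁ h1v h1w).mpr hh))]
      have e2 : adjNum G v u₂ = adjNum G w u₂ := by
        by_cases h : G.Adj v u₂
        · rw [adjNum_eq_one h, adjNum_eq_one ((htw u₂ h2v h2w).mp h)]
        · rw [adjNum_eq_zero h,
            adjNum_eq_zero (fun hh => h ((htw u₂ h2v h2w).mpr hh))]
      rw [e1, e2]; ring
  · rintro ⟨hleaf, htw⟩ v w ⟨hr, hrel⟩
    by_contra hne
    classical
    by_cases hA : ∃ a, a ≠ v ∧ a ≠ w ∧ G.Adj v a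
    · by_cases hB : ∃ b, b ≠ v ∧ b ≠ w ∧ G.Adj w b
      · obtain ⟨a, hav, haw, hva⟩ := hA
        obtain ⟨b, hbv, hbw, hwb⟩ := hB
        have key := hrel a b hav haw hbv hbw
        rw [adjNum_eq_one hva, adjNum_eq_one hwb, one_mul] at key
        have hwa : G.Adj w a := by
          by_contra h
          rw [adjNum_eq_zero h, mul_zero] at key
          simp at key
        apply htw v w hne
        intro u huv huw
        have h2 := hrel a u hav haw huv huw
        rw [adjNum_eq_one hva, adjNum_eq_one hwa, one_mul, mul_one] at h2
        exact adj_iff_of_adjNum_eq h2.symm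
      · -- w is a leaf with neighbor v
        push_neg at hB
        apply hleaf w
        rw [Set.ncard_eq_one]
        refine ⟨v, ?_⟩
        obtain ⟨x, hx⟩ := exists_adj G hconn hcard w
        have hxv : x = v := by
          by_contra hxv
          exact (hB x hxv hx.ne') hx
        ext u
        simp only [SimpleGraph.mem_neighborSet, Set.mem_singleton_iff]
        constructor
        · intro h
          by_contra huv
          exact (hB u huv h.ne') h
        · intro h; subst h; exact hxv ▸ hx
    · -- v is a leaf with neighbor w
      push_neg at hA
      apply hleaf v
      rw [Set.ncard_eq_one]
      refine ⟨w, ?_⟩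
      obtain ⟨x, hx⟩ := exists_adj G hconn hcard v
      have hxw : x = w := by
        by_contra hxw
        exact (hA x hx.ne' hxw) hx
      ext u
      simp only [SimpleGraph.mem_neighborSet, Set.mem_singleton_iff]
      constructor
      · intro h
        by_contra huw
        exact (hA u h.ne' huw) h
      · intro h; subst h; exact hxw ▸ hx

end Foliage
end
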